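/- arXiv:0808.3119 — 2 statements merged into one kernel-verified Lean document; each statement's English description precedes it below -/
import Mathlib

section
/- Let k be a field, G a finite group, H a subgroup of G, and let X be a cochain complex of H-projective kG-modules whose restriction to kH is split exact. Then for every integer n, the inclusion Z^n(X) → X^n is an H-Proj-preenvelope: for every H-projective kG-module P and every kG-homomorphism f : Z^n(X) → P, there exists a kG-homomorphism g : X^n → P whose restriction to Z^n(X) equals f. -/
open CategoryTheory

/-- The inclusion of group algebras `kH →+* kG` induced by the inclusion `H ≤ G`. -/
noncomputable def hres (k : Type) [Field k] (G : Type) [Group G] (H : Subgroup G) :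
    MonoidAlgebra k ↥H →+* MonoidAlgebra k G :=
  MonoidAlgebra.mapDomainRingHom k H.subtype

/-- Restriction of scalars from `kG`-modules to `kH`-modules, applied termwise to
cochain complexes. -/
noncomputable def ResC (k : Type) [Field k] (G : Type) [Group G] (H : Subgroup G) :
    CochainComplex (ModuleCat (MonoidAlgebra k G)) ℤ ⥤
      CochainComplex (ModuleCat (MonoidAlgebra k ↥H)) ℤ :=
  (ModuleCat.restrictScalars (hres k G H)).mapHomologicalComplex (ComplexShape.up ℤ)

/-- The induced module `kG ⊗_{kH} N` of a `kH`-module `N`, constructed as the quotient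
of the free `kG`-module on the underlying set of `N` by the usual bilinearity and
`kH`-balancedness relations. -/
noncomputable def IndObj (k : Type) [Field k] (G : Type) [Group G] (H : Subgroup G)
    (N : ModuleCat (MonoidAlgebra k ↥H)) : ModuleCat (MonoidAlgebra k G) :=
  ModuleCat.of (MonoidAlgebra k G)
    ((↥N →₀ MonoidAlgebra k G) ⧸ (Submodule.span (MonoidAlgebra k G)
      ({x | ∃ n n' : ↥N, x = Finsupp.single (n + n') (1 : MonoidAlgebra k G)
              - Finsupp.single n 1 - Finsupp.single n' 1} ∪
       {x | ∃ (r : MonoidAlgebra k ↥H) (n : ↥N),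
              x = Finsupp.single (r • n) (1 : MonoidAlgebra k G)
                - Finsupp.single n (hres k G H r)})))

/-- A `kG`-module is `H`-projective if it is a direct summand of a module induced
from a `kH`-module. -/
def IsHProj (k : Type) [Field k] (G : Type) [Group G] (H : Subgroup G)
    (M : ModuleCat (MonoidAlgebra k G)) : Prop :=
  ∃ (N : ModuleCat (MonoidAlgebra k ↥H)) (i : M ⟶ IndObj k G H N)
    (r : IndObj k G H N ⟶ M), i ≫ r = 𝟙 M

/-- The cycles `Z^n(X) = ker (d^n)` of a cochain complex of modules. -/
def Zn {R : Type} [Ring R] (X : CochainComplex (ModuleCat R) ℤ) (n : ℤ) :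
    Submodule R (X.X n) :=
  LinearMap.ker (X.d n (n + 1)).hom

/-!
Higman's criterion: if `P` is `H`-projective, then `id_P` is the relative trace
`Tr_H^G(u) = ∑_{gH ∈ G/H} g ∘ u ∘ g⁻¹` of a `kH`-linear endomorphism `u` of `P`. For
`P = kG ⊗_{kH} N` one takes `u (c ⊗ n) = c_H ⊗ n`, where `c_H` keeps the coefficients of `c`
on `H`, and the property passes to direct summands.

A contracting homotopy `s` of the restricted complex makes `d ∘ s` a `kH`-linear retraction of
`X^n` onto `Z^n(X)`. Given `f : Z^n(X) → P`, the relative trace `Tr_H^G(u ∘ f ∘ d ∘ s)` is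
`kG`-linear, and on `Z^n(X)` it equals `Tr_H^G(u) ∘ f = f`.
-/

open MonoidAlgebra

theorem hres_single {k : Type} [Field k] {G : Type} [Group G] {H : Subgroup G} (h : H) (a : k) :
    hres k G H (single h a) = single (h : G) a := by
  simp [hres, mapDomainRingHom]

namespace MonoidAlgebra

theorem single_smul_single_smul {R M V : Type*} [Semiring R] [Monoid M] [AddCommMonoid V]
    [Module R[M] V] (a b : M) (c d : R) (v : V) :
    single a c • single b d • v = single (a * b) (c * d) • v := by
  rw [← mul_smul, single_mul_single]

variable {k : Type} [Field k] {G : Type} [Group G] (H : Subgroup G)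

open scoped Classical in
noncomputable def filterSubgroup : k[G] →+ k[G] :=
  coeffAddEquiv.symm.toAddMonoidHom.comp
    ((Finsupp.filterAddHom (· ∈ H)).comp coeffAddEquiv.toAddMonoidHom)

open scoped Classical in
theorem coeff_filterSubgroup (c : k[G]) (g : G) :
    (filterSubgroup H c).coeff g = if g ∈ H then c.coeff g else 0 :=
  Finsupp.filter_apply _ _ _

theorem filterSubgroup_single_of_mem {g : G} (hg : g ∈ H) (a : k) :
    filterSubgroup H (single g a) = single g a := by
  classical exact congrArg ofCoeff (Finsupp.filter_single_of_pos _ hg)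

theorem filterSubgroup_single_of_notMem {g : G} (hg : g ∉ H) (a : k) :
    filterSubgroup H (single g a) = 0 := by
  classical exact congrArg ofCoeff (Finsupp.filter_single_of_neg _ hg)

theorem filterSubgroup_single_mul {h : G} (hh : h ∈ H) (a : k) (c : k[G]) :
    filterSubgroup H (single h a * c) = single h a * filterSubgroup H c := by
  classical
  ext g
  simp only [coeff_filterSubgroup, coeff_single_mul_apply, mul_ite, mul_zero]
  exact if_congr (H.mul_mem_cancel_left (inv_mem hh)).symm rfl rfl

theorem filterSubgroup_mul_single {h : G} (hh : h ∈ H) (a : k) (c : k[G]) :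
    filterSubgroup H (c * single h a) = filterSubgroup H c * single h a := by
  classical
  ext g
  simp only [coeff_filterSubgroup, coeff_mul_single_apply, ite_mul, zero_mul]
  exact if_congr (H.mul_mem_cancel_right (inv_mem hh)).symm rfl rfl

theorem filterSubgroup_hres_mul (s : k[H]) (c : k[G]) :
    filterSubgroup H (hres k G H s * c) = hres k G H s * filterSubgroup H c := by
  induction s using MonoidAlgebra.induction_linear with
  | zero => simp
  | add s t hs ht => simp only [map_add, add_mul, hs, ht]
  | single h a => rw [hres_single, filterSubgroup_single_mul H h.2]

theorem filterSubgroup_mul_hres (s : k[H]) (c : k[G]) :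
    filterSubgroup H (c * hres k G H s) = filterSubgroup H c * hres k G H s := by
  induction s using MonoidAlgebra.induction_linear with
  | zero => simp
  | add s t hs ht => simp only [map_add, mul_add, hs, ht]
  | single h a => rw [hres_single, filterSubgroup_mul_single H h.2]

end MonoidAlgebra

theorem Homotopy.d_hom_apply_eq_self {R : Type*} [Ring R] {Y : CochainComplex (ModuleCat R) ℤ}
    (h : Homotopy (𝟙 Y) 0) {n : ℤ} {z : Y.X n} (hz : Y.d n (n + 1) z = 0) :
    Y.d (n - 1) n (h.hom n (n - 1) z) = z := by
  have hcomm := congr($(h.comm n).hom z)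
  rw [dNext_eq h.hom (show (ComplexShape.up ℤ).Rel n (n + 1) from rfl),
    prevD_eq h.hom (show (ComplexShape.up ℤ).Rel (n - 1) n by simp)] at hcomm
  simpa [hz] using hcomm.symm

theorem d_apply_mem_Zn {R : Type} [Ring R] (X : CochainComplex (ModuleCat R) ℤ) (n : ℤ)
    (x : X.X (n - 1)) : X.d (n - 1) n x ∈ Zn X n := by
  rw [Zn, LinearMap.mem_ker, ← ModuleCat.comp_apply, X.d_comp_d]
  rfl

section RelativeProjectivity

variable {k : Type} [Field k] {G : Type} [Group G] {H : Subgroup G}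

local notation "Res" => ModuleCat.restrictScalars (hres k G H)

section RelativeTrace

variable {M P : ModuleCat k[G]}

def resLinearMap (f : M →ₗ[k[G]] P) : (Res).obj M →ₗ[k[H]] (Res).obj P :=
  { f with map_smul' := fun s => f.map_smul (hres k G H s) }

variable (φ : (ModuleCat.restrictScalars (hres k G H)).obj M →ₗ[k[H]]
  (ModuleCat.restrictScalars (hres k G H)).obj P)

theorem map_hres_smul (s : k[H]) (x : (Res).obj M) :
    φ (hres k G H s • x) = hres k G H s • φ x :=
  φ.map_smul s x

theorem map_single_smul {h : G} (hh : h ∈ H) (a : k) (x : (Res).obj M) :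
    φ (single h a • x) = single h a • φ x := by
  simpa only [hres_single] using map_hres_smul φ (single (⟨h, hh⟩ : H) a) x

-- `g φ(g⁻¹ x)` only depends on the coset `gH`, because `φ` commutes with the action of `H`.
variable (H) in
noncomputable def cosetTerm (x : (Res).obj M) : G ⧸ H → (Res).obj P :=
  Quotient.lift (fun a : G => single a (1 : k) • φ (single a⁻¹ (1 : k) • x))
    fun a b hab => by
      obtain ⟨h, hh, rfl⟩ : ∃ h ∈ H, b = a * h :=
        ⟨a⁻¹ * b, QuotientGroup.leftRel_apply.mp hab, by group⟩
      rw [mul_inv_rev, ← mul_one (1 : k), ← single_smul_single_smul h⁻¹,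
        map_single_smul φ (inv_mem hh), single_smul_single_smul, mul_one, mul_one,
        mul_inv_cancel_right]

theorem cosetTerm_mk (x : (Res).obj M) (a : G) :
    cosetTerm H φ x a = single a (1 : k) • φ (single a⁻¹ (1 : k) • x) :=
  rfl

theorem cosetTerm_smul (x : (Res).obj M) (g : G) (c : k) (q : G ⧸ H) :
    cosetTerm H φ (single g c • x) (g • q) = single g c • cosetTerm H φ x q := by
  induction q using QuotientGroup.induction_on with | H a => ?_
  have hx : single a⁻¹ c • x = single (1 : G) c • single a⁻¹ (1 : k) • x := by
    rw [single_smul_single_smul, one_mul, mul_one]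
  rw [MulAction.Quotient.smul_mk, smul_eq_mul, cosetTerm_mk, cosetTerm_mk,
    single_smul_single_smul, mul_inv_rev, inv_mul_cancel_right, one_mul, hx,
    map_single_smul φ H.one_mem, single_smul_single_smul, single_smul_single_smul, mul_one,
    one_mul, mul_one]

theorem cosetTerm_add (x y : (Res).obj M) (q : G ⧸ H) :
    cosetTerm H φ (x + y) q = cosetTerm H φ x q + cosetTerm H φ y q := by
  induction q using QuotientGroup.induction_on with | H a => ?_
  rw [cosetTerm_mk, cosetTerm_mk, cosetTerm_mk, smul_add, LinearMap.map_add, smul_add]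

theorem cosetTerm_comp_resLinearMap {L : ModuleCat k[G]} (a : L →ₗ[k[G]] M) (x : (Res).obj L)
    (q : G ⧸ H) : cosetTerm H (φ ∘ₗ resLinearMap a) x q = cosetTerm H φ (a x) q := by
  induction q using QuotientGroup.induction_on with | H g => ?_
  exact congrArg (fun y => single g (1 : k) • φ y) (a.map_smul _ _)

theorem cosetTerm_resLinearMap_comp {Q : ModuleCat k[G]} (b : P →ₗ[k[G]] Q) (x : (Res).obj M)
    (q : G ⧸ H) : cosetTerm H (resLinearMap b ∘ₗ φ) x q = b (cosetTerm H φ x q) := by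
  induction q using QuotientGroup.induction_on with | H g => ?_
  exact (b.map_smul _ _).symm

variable [Fintype (G ⧸ H)]

theorem sum_cosetTerm_single_smul (x : (Res).obj M) (g : G) (c : k) :
    ∑ q, cosetTerm H φ (single g c • x) q = single g c • ∑ q, cosetTerm H φ x q := by
  rw [Finset.smul_sum, ← Equiv.sum_comp (MulAction.toPerm g)]
  exact Finset.sum_congr rfl fun q _ => cosetTerm_smul φ x g c q

theorem sum_cosetTerm_smul (r : k[G]) (x : (Res).obj M) :
    ∑ q, cosetTerm H φ (r • x) q = r • ∑ q, cosetTerm H φ x q := by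
  induction r using MonoidAlgebra.induction_linear with
  | zero => simpa only [single_zero] using sum_cosetTerm_single_smul φ x 1 0
  | add r s hr hs => simp only [add_smul, cosetTerm_add, Finset.sum_add_distrib, hr, hs]
  | single g c => exact sum_cosetTerm_single_smul φ x g c

variable (H) in
noncomputable def relTrace : M →ₗ[k[G]] P where
  toFun x := ∑ q, cosetTerm H φ x q
  map_add' x y :=
    (Finset.sum_congr rfl fun q _ => cosetTerm_add φ x y q).trans Finset.sum_add_distrib
  map_smul' := sum_cosetTerm_smul φ

theorem relTrace_comp_resLinearMap {L : ModuleCat k[G]} (a : L →ₗ[k[G]] M) :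
    relTrace H (φ ∘ₗ resLinearMap a) = relTrace H φ ∘ₗ a :=
  LinearMap.ext fun x => Finset.sum_congr rfl fun q _ => cosetTerm_comp_resLinearMap φ a x q

theorem resLinearMap_comp_relTrace {Q : ModuleCat k[G]} (b : P →ₗ[k[G]] Q) :
    relTrace H (resLinearMap b ∘ₗ φ) = b ∘ₗ relTrace H φ :=
  LinearMap.ext fun x =>
    (Finset.sum_congr rfl fun q _ => cosetTerm_resLinearMap_comp φ b x q).trans
      (map_sum b _ _).symm

theorem exists_comp_eq_of_relTrace_eq_id {Z : ModuleCat k[G]} {i : Z →ₗ[k[G]] M}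
    {ρ : (Res).obj M →ₗ[k[H]] (Res).obj Z} (hρ : ρ ∘ₗ resLinearMap i = LinearMap.id)
    {u : (Res).obj P →ₗ[k[H]] (Res).obj P} (hu : relTrace H u = LinearMap.id)
    (f : Z →ₗ[k[G]] P) : ∃ g : M →ₗ[k[G]] P, g ∘ₗ i = f :=
  ⟨relTrace H (u ∘ₗ resLinearMap f ∘ₗ ρ), by
    rw [← relTrace_comp_resLinearMap, LinearMap.comp_assoc, LinearMap.comp_assoc, hρ,
      LinearMap.comp_id, relTrace_comp_resLinearMap, hu, LinearMap.id_comp]⟩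

theorem exists_relTrace_eq_id_of_retract {Q : ModuleCat k[G]} (i : P →ₗ[k[G]] Q)
    (r : Q →ₗ[k[G]] P) (hir : r ∘ₗ i = LinearMap.id)
    {u : (Res).obj Q →ₗ[k[H]] (Res).obj Q} (hu : relTrace H u = LinearMap.id) :
    ∃ v : (Res).obj P →ₗ[k[H]] (Res).obj P, relTrace H v = LinearMap.id :=
  ⟨resLinearMap r ∘ₗ u ∘ₗ resLinearMap i, by
    rw [resLinearMap_comp_relTrace, relTrace_comp_resLinearMap, hu, LinearMap.id_comp, hir]⟩

end RelativeTrace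

section Induced

variable (N : ModuleCat k[H])

-- `IndObj k G H N` is by definition the quotient of `N →₀ kG` by the span of these relations;
-- `Finsupp.single n c` stands for `c ⊗ n`.
def indRel : Set (N →₀ k[G]) :=
  {x | ∃ n n' : ↥N, x = Finsupp.single (n + n') (1 : k[G]) - Finsupp.single n 1
    - Finsupp.single n' 1} ∪
  {x | ∃ (r : k[H]) (n : ↥N), x = Finsupp.single (r • n) (1 : k[G])
    - Finsupp.single n (hres k G H r)}

noncomputable def indMkQ : (N →₀ k[G]) →ₗ[k[G]] IndObj k G H N :=
  (Submodule.span k[G] (indRel N)).mkQ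

variable (H) in
noncomputable abbrev filterCoeffs : (N →₀ k[G]) →+ (N →₀ k[G]) :=
  Finsupp.mapRange.addMonoidHom (filterSubgroup H)

theorem filterCoeffs_hres_smul (s : k[H]) (v : N →₀ k[G]) :
    filterCoeffs H N (hres k G H s • v) = hres k G H s • filterCoeffs H N v := by
  ext n
  simp [filterSubgroup_hres_mul]

theorem filterCoeffs_smul_of_mem_indRel {x : N →₀ k[G]} (hx : x ∈ indRel N)
    (c : k[G]) : filterCoeffs H N (c • x) = filterSubgroup H c • x := by
  rcases hx with ⟨n, n', rfl⟩ | ⟨r, n, rfl⟩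
  all_goals
    simp only [smul_sub, Finsupp.smul_single, smul_eq_mul, mul_one, map_sub,
      Finsupp.mapRange.addMonoidHom_apply, Finsupp.mapRange_single, filterSubgroup_mul_hres]

-- `span R s` is the additive closure of `R • s`.
theorem span_indRel_le_comap_filterCoeffs :
    (Submodule.span k[G] (indRel N)).toAddSubgroup ≤
      (Submodule.span k[G] (indRel N)).toAddSubgroup.comap (filterCoeffs H N) := by
  intro x hx
  rw [Submodule.mem_toAddSubgroup, ← Submodule.mem_toAddSubmonoid, Submodule.span_eq_closure]
    at hx
  induction hx using AddSubmonoid.closure_induction with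
  | mem y hy =>
    obtain ⟨c, -, y, hy, rfl⟩ := hy
    rw [AddSubgroup.mem_comap, filterCoeffs_smul_of_mem_indRel N hy]
    exact Submodule.smul_mem _ _ (Submodule.subset_span hy)
  | zero => exact zero_mem _
  | add y z _ _ hy hz => exact add_mem hy hz

noncomputable def indFilterAddHom : IndObj k G H N →+ IndObj k G H N :=
  QuotientAddGroup.map _ _ (filterCoeffs H N) (span_indRel_le_comap_filterCoeffs N)

theorem indFilterAddHom_mkQ (v : N →₀ k[G]) :
    indFilterAddHom N (indMkQ N v) = indMkQ N (filterCoeffs H N v) :=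
  rfl

noncomputable def indFilter :
    (Res).obj (IndObj k G H N) →ₗ[k[H]] (Res).obj (IndObj k G H N) where
  toFun := indFilterAddHom N
  map_add' := map_add _
  map_smul' s x := by
    obtain ⟨v, rfl⟩ := Submodule.mkQ_surjective _ x
    exact congrArg (indMkQ N) (filterCoeffs_hres_smul N s v)

open scoped Classical in
theorem cosetTerm_indFilter (n : N) (q : G ⧸ H) :
    cosetTerm H (indFilter N) (indMkQ N (Finsupp.single n 1)) q =
      if q = ((1 : G) : G ⧸ H) then indMkQ N (Finsupp.single n 1) else 0 := by
  induction q using QuotientGroup.induction_on with | H a => ?_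
  change single a (1 : k) •
    indFilterAddHom N (single a⁻¹ (1 : k) • indMkQ N (.single n 1)) = _
  rw [← LinearMap.map_smul (indMkQ N), indFilterAddHom_mkQ, Finsupp.smul_single, smul_eq_mul,
    mul_one, Finsupp.mapRange.addMonoidHom_apply, Finsupp.mapRange_single, ← LinearMap.map_smul,
    Finsupp.smul_single, smul_eq_mul]
  by_cases ha : a ∈ H
  · rw [filterSubgroup_single_of_mem H (inv_mem ha), single_mul_single, mul_inv_cancel, mul_one,
      ← one_def, if_pos (QuotientGroup.eq.mpr (by simpa using ha))]
  · rw [filterSubgroup_single_of_notMem H (fun h => ha (by simpa using h)), mul_zero,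
      Finsupp.single_zero, map_zero, if_neg (fun h => ha (by simpa using QuotientGroup.eq.mp h))]

theorem relTrace_indFilter [Fintype (G ⧸ H)] : relTrace H (indFilter N) = LinearMap.id := by
  apply Submodule.linearMap_qext
  apply Finsupp.lhom_ext'
  intro n
  apply LinearMap.ext_ring
  change ∑ q, cosetTerm H (indFilter N) (indMkQ N (Finsupp.single n 1)) q =
    indMkQ N (Finsupp.single n 1)
  classical
  exact (Finset.sum_congr rfl fun q _ => cosetTerm_indFilter N n q).trans
    (Fintype.sum_ite_eq' _ _)

end Induced

theorem IsHProj.exists_relTrace_eq_id [Fintype (G ⧸ H)] {P : ModuleCat k[G]}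
    (hP : IsHProj k G H P) :
    ∃ u : (Res).obj P →ₗ[k[H]] (Res).obj P, relTrace H u = LinearMap.id := by
  obtain ⟨N, i, r, hir⟩ := hP
  exact exists_relTrace_eq_id_of_retract i.hom r.hom (congrArg ModuleCat.Hom.hom hir)
    (relTrace_indFilter N)

theorem exists_retraction_Zn_subtype (X : CochainComplex (ModuleCat k[G]) ℤ)
    (h : Homotopy (𝟙 ((ResC k G H).obj X)) 0) (n : ℤ) :
    ∃ ρ : (Res).obj (X.X n) →ₗ[k[H]] (Res).obj (ModuleCat.of _ (Zn X n)),
      ρ ∘ₗ resLinearMap (Zn X n).subtype = LinearMap.id := by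
  let dh := (h.hom n (n - 1) ≫ ((ResC k G H).obj X).d (n - 1) n).hom
  refine ⟨{ toFun x := ⟨dh x, d_apply_mem_Zn X n _⟩
            map_add' x y := Subtype.ext (dh.map_add x y)
            map_smul' s x := Subtype.ext (dh.map_smul s x) }, ?_⟩
  ext z
  exact Subtype.ext (h.d_hom_apply_eq_self z.2)

end RelativeProjectivity

theorem stmt_1_general (k : Type) [Field k] (G : Type) [Group G] [Finite G] (H : Subgroup G)
    (X : CochainComplex (ModuleCat (MonoidAlgebra k G)) ℤ)
    (hX : Nonempty (Homotopy (𝟙 ((ResC k G H).obj X)) 0)) :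
    ∀ (n : ℤ) (P : ModuleCat (MonoidAlgebra k G)), IsHProj k G H P →
      ∀ f : ↥(Zn X n) →ₗ[MonoidAlgebra k G] ↥P,
        ∃ g : ↥(X.X n) →ₗ[MonoidAlgebra k G] ↥P,
          g ∘ₗ (Zn X n).subtype = f := by
  intro n P hP f
  have : Fintype (G ⧸ H) := Fintype.ofFinite _
  obtain ⟨h⟩ := hX
  obtain ⟨ρ, hρ⟩ := exists_retraction_Zn_subtype X h n
  obtain ⟨u, hu⟩ := hP.exists_relTrace_eq_id
  exact exists_comp_eq_of_relTrace_eq_id hρ hu f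

theorem stmt_1 (k : Type) [Field k] (G : Type) [Group G] [Finite G] (H : Subgroup G)
    (X : CochainComplex (ModuleCat (MonoidAlgebra k G)) ℤ)
    (hHP : ∀ n : ℤ, IsHProj k G H (X.X n))
    (hX : Nonempty (Homotopy (𝟙 ((ResC k G H).obj X)) 0)) :
    ∀ (n : ℤ) (P : ModuleCat (MonoidAlgebra k G)), IsHProj k G H P →
      ∀ f : ↥(Zn X n) →ₗ[MonoidAlgebra k G] ↥P,
        ∃ g : ↥(X.X n) →ₗ[MonoidAlgebra k G] ↥P,
          g ∘ₗ (Zn X n).subtype = f :=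
  stmt_1_general k G H X hX
end

section
/- Let k be a field, G a finite group, H a subgroup of G, and let X be a cochain complex of H-projective kG-modules whose restriction to kH is split exact. Then for every integer n, the surjection X^n → Z^{n+1}(X) induced by the differential is an H-Proj-precover: for every H-projective kG-module P and every kG-homomorphism f : P → Z^{n+1}(X), there exists a kG-homomorphism g : P → X^n such that f equals the composite of g with the corestricted differential X^n → Z^{n+1}(X). -/
/-!
A null-homotopy `s` of the restricted complex is a `kH`-linear map with `d ∘ s = id` on cycles,
so `d : X^n → Z^{n+1}(X)` splits over `kH`. Induced modules are projective relative to
`kH`-split maps: a `kG`-map out of `kG ⊗_{kH} N` is the same as a `kH`-map out of `N`, so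
`s ∘ f` restricted to the generators `1 ⊗ m` induces a `kG`-linear lift of `f` through `d`.
Direct summands of induced modules inherit this lifting property.
-/

open CategoryTheory

theorem Homotopy.d_hom_apply_eq_self_s2 {R : Type} [Ring R]
    {C : CochainComplex (ModuleCat R) ℤ} (s : Homotopy (𝟙 C) 0) (n : ℤ) (x : C.X (n + 1))
    (hx : C.d (n + 1) (n + 1 + 1) x = 0) : C.d n (n + 1) (s.hom (n + 1) n x) = x := by
  have hcomm := congrArg (fun φ => φ.hom x) (s.comm (n + 1))
  rw [dNext_eq _ (show (ComplexShape.up ℤ).Rel (n + 1) (n + 1 + 1) by simp),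
    prevD_eq _ (show (ComplexShape.up ℤ).Rel n (n + 1) by simp)] at hcomm
  simpa [hx] using hcomm.symm

noncomputable section

namespace IndObj

variable (k : Type) [Field k] (G : Type) [Group G] (H : Subgroup G)
  (N : ModuleCat (MonoidAlgebra k ↥H))

def relations : Submodule (MonoidAlgebra k G) (↥N →₀ MonoidAlgebra k G) :=
  Submodule.span (MonoidAlgebra k G)
    ({x | ∃ n n' : ↥N, x = Finsupp.single (n + n') (1 : MonoidAlgebra k G)
            - Finsupp.single n 1 - Finsupp.single n' 1} ∪
     {x | ∃ (r : MonoidAlgebra k ↥H) (n : ↥N),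
            x = Finsupp.single (r • n) (1 : MonoidAlgebra k G)
              - Finsupp.single n (hres k G H r)})

def mk : (↥N →₀ MonoidAlgebra k G) →ₗ[MonoidAlgebra k G] IndObj k G H N :=
  (relations k G H N).mkQ

theorem mk_eq_zero {x : ↥N →₀ MonoidAlgebra k G} (hx : x ∈ relations k G H N) :
    mk k G H N x = 0 :=
  (Submodule.Quotient.mk_eq_zero _).2 hx

def unit : N →ₛₗ[hres k G H] IndObj k G H N where
  toFun m := mk k G H N (Finsupp.single m 1)
  map_add' m m' := by
    have h := mk_eq_zero k G H N (Submodule.subset_span (Or.inl ⟨m, m', rfl⟩))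
    rwa [map_sub, map_sub, sub_sub, sub_eq_zero] at h
  map_smul' r m := by
    have h := mk_eq_zero k G H N (Submodule.subset_span (Or.inr ⟨r, m, rfl⟩))
    rwa [map_sub, sub_eq_zero, ← mul_one (hres k G H r), ← smul_eq_mul, ← Finsupp.smul_single,
      map_smul] at h

variable {k G H N} {M : Type*} [AddCommGroup M] [Module (MonoidAlgebra k G) M]

theorem hom_ext {f g : IndObj k G H N →ₗ[MonoidAlgebra k G] M}
    (h : ∀ m : ↥N, f (unit k G H N m) = g (unit k G H N m)) : f = g := by
  refine Submodule.linearMap_qext _ (Finsupp.lhom_ext fun m b => ?_)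
  have hb : Finsupp.single m b = b • Finsupp.single m (1 : MonoidAlgebra k G) := by
    rw [Finsupp.smul_single, smul_eq_mul, mul_one]
  simp only [hb, map_smul]
  exact congrArg (b • ·) (h m)

def lift (φ : ↥N →ₛₗ[hres k G H] M) : IndObj k G H N →ₗ[MonoidAlgebra k G] M :=
  (relations k G H N).liftQ (Finsupp.linearCombination (MonoidAlgebra k G) φ) <| by
    rw [relations, Submodule.span_le]
    rintro x (⟨m, m', rfl⟩ | ⟨r, m, rfl⟩) <;>
      simp only [SetLike.mem_coe, LinearMap.mem_ker, map_sub, Finsupp.linearCombination_single,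
        one_smul, map_add, map_smulₛₗ, sub_sub, sub_self]

theorem lift_unit (φ : ↥N →ₛₗ[hres k G H] M) (m : ↥N) : lift φ (unit k G H N m) = φ m := by
  change (relations k G H N).liftQ _ _ (Submodule.Quotient.mk _) = _
  rw [Submodule.liftQ_apply, Finsupp.linearCombination_single, one_smul]

theorem exists_lift_of_section {A B : ModuleCat (MonoidAlgebra k G)} (p : A ⟶ B)
    (σ : (ModuleCat.restrictScalars (hres k G H)).obj B ⟶
      (ModuleCat.restrictScalars (hres k G H)).obj A)
    (f : IndObj k G H N →ₗ[MonoidAlgebra k G] B) (hf : ∀ x, p (σ (f x)) = f x) :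
    ∃ g : IndObj k G H N →ₗ[MonoidAlgebra k G] A, p.hom ∘ₗ g = f := by
  let φ : ↥N →ₛₗ[hres k G H] A :=
    { toFun m := σ (f (unit k G H N m))
      map_add' m m' := by
        simp only [map_add]
        exact σ.hom.map_add _ _
      map_smul' r m := by
        simp only [map_smulₛₗ]
        exact σ.hom.map_smul r _ }
  exact ⟨lift φ, hom_ext fun m => (congrArg p.hom (lift_unit φ m)).trans (hf _)⟩

end IndObj

end

theorem IsHProj.exists_lift_of_section {k : Type} [Field k] {G : Type} [Group G]
    {H : Subgroup G} {P A B : ModuleCat (MonoidAlgebra k G)} (hP : IsHProj k G H P)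
    (p : A ⟶ B)
    (σ : (ModuleCat.restrictScalars (hres k G H)).obj B ⟶
      (ModuleCat.restrictScalars (hres k G H)).obj A)
    (f : P →ₗ[MonoidAlgebra k G] B) (hf : ∀ x, p (σ (f x)) = f x) :
    ∃ g : P →ₗ[MonoidAlgebra k G] A, p.hom ∘ₗ g = f := by
  obtain ⟨N, i, r, hir⟩ := hP
  obtain ⟨g, hg⟩ := IndObj.exists_lift_of_section p σ (f ∘ₗ r.hom) fun x => hf (r x)
  refine ⟨g ∘ₗ i.hom, ?_⟩
  rw [← LinearMap.comp_assoc, hg, LinearMap.comp_assoc, ← ModuleCat.hom_comp, hir,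
    ModuleCat.hom_id, LinearMap.comp_id]

theorem stmt_2_general (k : Type) [Field k] (G : Type) [Group G] (H : Subgroup G)
    (X : CochainComplex (ModuleCat (MonoidAlgebra k G)) ℤ)
    (hX : Nonempty (Homotopy (𝟙 ((ResC k G H).obj X)) 0)) :
    ∀ (n : ℤ) (P : ModuleCat (MonoidAlgebra k G)), IsHProj k G H P →
      ∀ f : ↥P →ₗ[MonoidAlgebra k G] ↥(Zn X (n + 1)),
        ∃ g : ↥P →ₗ[MonoidAlgebra k G] ↥(X.X n),
          (Zn X (n + 1)).subtype ∘ₗ f =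
            ((X.d n (n + 1)).hom : X.X n →ₗ[MonoidAlgebra k G] X.X (n + 1)) ∘ₗ g := by
  intro n P hP f
  obtain ⟨s⟩ := hX
  obtain ⟨g, hg⟩ := hP.exists_lift_of_section (X.d n (n + 1)) (s.hom (n + 1) n)
    ((Zn X (n + 1)).subtype ∘ₗ f) fun x => s.d_hom_apply_eq_self_s2 n _ (f x).2
  exact ⟨g, hg.symm⟩

theorem stmt_2 (k : Type) [Field k] (G : Type) [Group G] [Finite G] (H : Subgroup G)
    (X : CochainComplex (ModuleCat (MonoidAlgebra k G)) ℤ)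
    (hHP : ∀ n : ℤ, IsHProj k G H (X.X n))
    (hX : Nonempty (Homotopy (𝟙 ((ResC k G H).obj X)) 0)) :
    ∀ (n : ℤ) (P : ModuleCat (MonoidAlgebra k G)), IsHProj k G H P →
      ∀ f : ↥P →ₗ[MonoidAlgebra k G] ↥(Zn X (n + 1)),
        ∃ g : ↥P →ₗ[MonoidAlgebra k G] ↥(X.X n),
          (Zn X (n + 1)).subtype ∘ₗ f =
            ((X.d n (n + 1)).hom : X.X n →ₗ[MonoidAlgebra k G] X.X (n + 1)) ∘ₗ g :=
  stmt_2_general k G H X hX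
end
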